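/- arXiv:2105.06862 — 2 statements merged into one kernel-verified Lean document; each statement's English description precedes it below -/
import Mathlib

section
/- Let r, k ∈ ℤ with 0 ≤ k ≤ r and suppose Assumption A1 holds. Then there is a constant κ_{r,k} > 0, depending only on r, k, d and the reference integrator Î but not on the interval, such that for every interval I_n = (t_{n−1}, t_n] of length τ_n and every φ ∈ P_r(I_n, ℝ^d): ∫_{I_n} ‖φ'(t)‖ dt ≤ τ_n · sup_{t∈I_n} ‖φ'(t)‖ ≤ κ_{r,k} ( Σ_{i=1}^{⌊(k−1)/2⌋} (τ_n/2)^i ‖φ^{(i)}(t_{n−1}^+)‖ + Σ_{i=1}^{⌊k/2⌋} (τ_n/2)^i ‖φ^{(i)}(t_n^-)‖ + Σ_{i=δ_{0,k}}^{r−k} ‖I_n[φ'(t)·(1+T_n^{−1}(t))^i]‖ ), and moreover sup_{t∈I_n} ‖φ(t)‖ ≤ min{‖φ(t_{n−1}^+)‖, ‖φ(t_n^-)‖} + ∫_{I_n} ‖φ'(t)‖ dt. -/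
open Set MeasureTheory
open scoped BigOperators RealInnerProductSpace

noncomputable section

/-- `ℝ^d` with the Euclidean norm. -/
abbrev Vec (d : ℕ) := EuclideanSpace ℝ (Fin d)

/-- `φ : ℝ → ℝ` is (the evaluation of) a polynomial of degree at most `s`
(`s : ℤ`; for `s < 0` this means the zero function). -/
def IsPolyR (s : ℤ) (φ : ℝ → ℝ) : Prop :=
  ∃ p : Polynomial ℝ, (∀ n : ℕ, s < (n : ℤ) → p.coeff n = 0) ∧ ∀ x : ℝ, φ x = p.eval x

/-- Vector-valued polynomials of degree at most `s`, componentwise. -/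
def IsPolyV {d : ℕ} (s : ℤ) (φ : ℝ → Vec d) : Prop :=
  ∀ i : Fin d, IsPolyR s fun x => φ x i

/-- Componentwise application of a (reference) integrator to a vector-valued function. -/
def vecI {d : ℕ} (Ih : (ℝ → ℝ) →ₗ[ℝ] ℝ) (φ : ℝ → Vec d) : Vec d :=
  WithLp.toLp 2 (fun i => Ih fun x => φ x i)

/-- Componentwise application of a (reference) approximation operator. -/
def vecOp {d : ℕ} (Ic : (ℝ → ℝ) →ₗ[ℝ] (ℝ → ℝ)) (φ : ℝ → Vec d) : ℝ → Vec d :=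
  fun x => WithLp.toLp 2 (fun i => Ic (fun y => φ y i) x)

/-- Affine map of the reference interval `(-1,1]` onto `(a,b]`. -/
def Tmap (a b x : ℝ) : ℝ := (a + b) / 2 + (b - a) / 2 * x

/-- Inverse of `Tmap a b`. -/
def Tinv (a b x : ℝ) : ℝ := (2 * x - (a + b)) / (b - a)

/-- Local (vector-valued) integrator `I_n` on `(a,b]`. -/
def locI {d : ℕ} (Ih : (ℝ → ℝ) →ₗ[ℝ] ℝ) (a b : ℝ) (φ : ℝ → Vec d) : Vec d :=
  ((b - a) / 2) • vecI Ih (φ ∘ Tmap a b)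

/-- Local scalar integrator on `(a,b]`. -/
def locIs (Ih : (ℝ → ℝ) →ₗ[ℝ] ℝ) (a b : ℝ) (g : ℝ → ℝ) : ℝ :=
  (b - a) / 2 * Ih (g ∘ Tmap a b)

/-- Local approximation operator `ℐ_n` on `(a,b]` (vector-valued). -/
def locOp {d : ℕ} (Ic : (ℝ → ℝ) →ₗ[ℝ] (ℝ → ℝ)) (a b : ℝ) (φ : ℝ → Vec d) : ℝ → Vec d :=
  fun x => vecOp Ic (φ ∘ Tmap a b) (Tinv a b x)

/-- Local approximation operator `ℐ_n` on `(a,b]` (scalar). -/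
def locOpR (Ic : (ℝ → ℝ) →ₗ[ℝ] (ℝ → ℝ)) (a b : ℝ) (φ : ℝ → ℝ) : ℝ → ℝ :=
  fun x => Ic (φ ∘ Tmap a b) (Tinv a b x)

/-- Supremum of the (Euclidean) norm over a set of times. -/
def supNorm {d : ℕ} (s : Set ℝ) (φ : ℝ → Vec d) : ℝ := ⨆ x : s, ‖φ (x : ℝ)‖

/-- Supremum of the absolute value over a set of times. -/
def supAbs (s : Set ℝ) (g : ℝ → ℝ) : ℝ := ⨆ x : s, |g (x : ℝ)|

/-- `k_𝒥 = max{⌊k/2⌋ − 1, k_𝓘, k_ℐ}`. -/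
def kJ (k : ℤ) (kI kIc : ℕ) : ℕ := max (max (k.fdiv 2 - 1).toNat kI) kIc

/-- Assumption A1 on the reference integrator. -/
def AssumptionA1 (Ih : (ℝ → ℝ) →ₗ[ℝ] ℝ) (r k : ℤ) : Prop :=
  ∀ ψ : ℝ → ℝ, IsPolyR (r - max 1 k) ψ →
    (∀ φ : ℝ → ℝ, IsPolyR (r - max 1 k) φ →
      Ih (fun x => (1 - x) ^ (k.fdiv 2).toNat * (1 + x) ^ ((k - 1).fdiv 2).natAbs *
        (ψ x * φ x)) = 0) →
    ∀ x : ℝ, ψ x = 0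

/-- Assumption A2 on the reference integrator. -/
def AssumptionA2 (d : ℕ) (Ih : (ℝ → ℝ) →ₗ[ℝ] ℝ) (kI : ℕ) (C0 : ℝ) : Prop :=
  ∀ φ : ℝ → Vec d, ContDiffOn ℝ (kI : ℕ∞) φ (Icc (-1 : ℝ) 1) →
    ‖vecI Ih φ‖ ≤ C0 * ∑ j ∈ Finset.range (kI + 1),
      supNorm (Icc (-1 : ℝ) 1) (iteratedDerivWithin j φ (Icc (-1 : ℝ) 1))

/-- Assumption A3 on the reference approximation operator. -/
def AssumptionA3 (d : ℕ) (Ic : (ℝ → ℝ) →ₗ[ℝ] (ℝ → ℝ)) (kI kIc : ℕ) (C1 : ℝ) : Prop :=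
  ∀ l : ℕ, l ≤ kI → ∀ φ : ℝ → Vec d,
    ContDiffOn ℝ ((max kIc l : ℕ) : ℕ∞) φ (Icc (-1 : ℝ) 1) →
    supNorm (Icc (-1 : ℝ) 1) (iteratedDerivWithin l (vecOp Ic φ) (Icc (-1 : ℝ) 1)) ≤
      C1 * ∑ j ∈ Finset.range (max kIc l + 1),
        supNorm (Icc (-1 : ℝ) 1) (iteratedDerivWithin j φ (Icc (-1 : ℝ) 1))

/-- Assumption A4, with smoothness level `m` playing the role of `k_𝒥`. -/
def AssumptionA4 (d : ℕ) (f : ℝ → Vec d → Vec d) (t0 T C2 : ℝ) (m : ℕ) : Prop :=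
  ∀ i : ℕ, i ≤ m → ∀ v w : ℝ → Vec d, ContDiff ℝ (⊤ : ℕ∞) v → ContDiff ℝ (⊤ : ℕ∞) w →
    ∀ᵐ s ∂(volume.restrict (Icc t0 (t0 + T))),
      ‖iteratedDeriv i (fun x => f x (v x) - f x (w x)) s‖ ≤
        C2 * ∑ l ∈ Finset.range (i + 1), ‖iteratedDeriv l (fun x => v x - w x) s‖

/-- Assumption A5a, stated for all local intervals. -/
def AssumptionA5a (d : ℕ) (Ic : (ℝ → ℝ) →ₗ[ℝ] (ℝ → ℝ)) (kI kIc : ℕ)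
    (K : ℕ) (th : Fin (K + 1) → ℝ) (Kt : Fin (K + 1) → ℕ) (C11 C12 : ℝ) : Prop :=
  Function.Injective th ∧ (∀ m, th m ∈ Icc (-1 : ℝ) 1) ∧
  ∀ a b : ℝ, a < b → b - a ≤ 1 → ∀ l : ℕ, l ≤ kI →
    ∀ φ : ℝ → Vec d, ContDiffOn ℝ (kIc : ℕ∞) φ (Icc a b) →
      ContDiffOn ℝ (l : ℕ∞) (locOp Ic a b φ) (Icc a b) ∧
      ((b - a) / 2) ^ l *
          supNorm (Ioc a b) (iteratedDerivWithin l (locOp Ic a b φ) (Icc a b)) ≤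
        C11 * ∑ m : Fin (K + 1), ∑ j ∈ Finset.range (Kt m + 1),
            ((b - a) / 2) ^ j *
              ‖iteratedDerivWithin j φ (Icc a b) (Tmap a b (th m))‖ +
        C12 * supNorm (Ioc a b) φ

/-- The conditions defining `Ĵ v` on the reference interval. -/
def JCondRef (Ih : (ℝ → ℝ) →ₗ[ℝ] ℝ) (Ic : (ℝ → ℝ) →ₗ[ℝ] (ℝ → ℝ)) (r k : ℤ)
    (v w : ℝ → ℝ) : Prop :=
  IsPolyR r w ∧
  (1 ≤ k → ∀ i : ℕ, (i : ℤ) ≤ (k - 1).fdiv 2 →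
    iteratedDeriv i w (-1) = iteratedDerivWithin i v (Icc (-1 : ℝ) 1) (-1)) ∧
  (2 ≤ k → ∀ i : ℕ, 1 ≤ i → (i : ℤ) ≤ k.fdiv 2 →
    iteratedDeriv i w 1 = iteratedDerivWithin i v (Icc (-1 : ℝ) 1) 1) ∧
  (∀ φ : ℝ → ℝ, IsPolyR (r - k) φ →
    Ih (fun x => deriv w x * φ x) + (if k = 0 then w (-1) * φ (-1) else 0) =
    Ih (fun x => Ic (derivWithin v (Icc (-1 : ℝ) 1)) x * φ x) +
      (if k = 0 then v (-1) * φ (-1) else 0))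

/-- The conditions defining the local approximation `J_n v` on `(a,b]`. -/
def JCondLoc (d : ℕ) (Ih : (ℝ → ℝ) →ₗ[ℝ] ℝ) (Ic : (ℝ → ℝ) →ₗ[ℝ] (ℝ → ℝ)) (r k : ℤ)
    (a b : ℝ) (v w : ℝ → Vec d) : Prop :=
  IsPolyV r w ∧
  (1 ≤ k → ∀ i : ℕ, (i : ℤ) ≤ (k - 1).fdiv 2 →
    iteratedDeriv i w a = iteratedDerivWithin i v (Icc a b) a) ∧
  (2 ≤ k → ∀ i : ℕ, 1 ≤ i → (i : ℤ) ≤ k.fdiv 2 →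
    iteratedDeriv i w b = iteratedDerivWithin i v (Icc a b) b) ∧
  (∀ φ : ℝ → Vec d, IsPolyV (r - k) φ →
    locIs Ih a b (fun x => ⟪deriv w x, φ x⟫) +
        (if k = 0 then ⟪w a, φ a⟫ else 0) =
      locIs Ih a b (fun x => ⟪locOp Ic a b (derivWithin v (Icc a b)) x, φ x⟫) +
        (if k = 0 then ⟪v a, φ a⟫ else 0))

/-- The conditions defining `P̂ v` on the reference interval. -/
def PCondRef (Ih : (ℝ → ℝ) →ₗ[ℝ] ℝ) (Ic : (ℝ → ℝ) →ₗ[ℝ] (ℝ → ℝ)) (r k : ℤ)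
    (v w : ℝ → ℝ) : Prop :=
  IsPolyR (r - 1) w ∧
  (3 ≤ k → ∀ i : ℕ, (i : ℤ) ≤ (k - 1).fdiv 2 - 1 →
    iteratedDeriv i w (-1) = iteratedDerivWithin i v (Icc (-1 : ℝ) 1) (-1)) ∧
  (2 ≤ k → ∀ i : ℕ, (i : ℤ) ≤ k.fdiv 2 - 1 →
    iteratedDeriv i w 1 = iteratedDerivWithin i v (Icc (-1 : ℝ) 1) 1) ∧
  (∀ φ : ℝ → ℝ, IsPolyR (r - k) φ → (k = 0 → φ (-1) = 0) →
    Ih (fun x => w x * φ x) = Ih (fun x => Ic v x * φ x))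

/-- The conditions defining the local approximation `P_n v` on `(a,b]`. -/
def PCondLoc (d : ℕ) (Ih : (ℝ → ℝ) →ₗ[ℝ] ℝ) (Ic : (ℝ → ℝ) →ₗ[ℝ] (ℝ → ℝ)) (r k : ℤ)
    (a b : ℝ) (v w : ℝ → Vec d) : Prop :=
  IsPolyV (r - 1) w ∧
  (3 ≤ k → ∀ i : ℕ, (i : ℤ) ≤ (k - 1).fdiv 2 - 1 →
    iteratedDeriv i w a = iteratedDerivWithin i v (Icc a b) a) ∧
  (2 ≤ k → ∀ i : ℕ, (i : ℤ) ≤ k.fdiv 2 - 1 →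
    iteratedDeriv i w b = iteratedDerivWithin i v (Icc a b) b) ∧
  (∀ φ : ℝ → Vec d, IsPolyV (r - k) φ → (k = 0 → φ a = 0) →
    locIs Ih a b (fun x => ⟪w x, φ x⟫) =
      locIs Ih a b (fun x => ⟪locOp Ic a b v x, φ x⟫))

/-- The local variational time discretization problem on `(a,b]` with incoming value `Uprev`. -/
def LocalVTD (d : ℕ) (Ih : (ℝ → ℝ) →ₗ[ℝ] ℝ) (Ic : (ℝ → ℝ) →ₗ[ℝ] (ℝ → ℝ)) (r k : ℤ)
    (a b : ℝ) (f : ℝ → Vec d → Vec d) (Uprev : Vec d) (U : ℝ → Vec d) : Prop :=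
  IsPolyV r U ∧
  (1 ≤ k → U a = Uprev) ∧
  (2 ≤ k → ∀ i : ℕ, (i : ℤ) ≤ k.fdiv 2 - 1 →
    iteratedDeriv (i + 1) U b = iteratedDeriv i (fun s => f s (U s)) b) ∧
  (3 ≤ k → ∀ i : ℕ, (i : ℤ) ≤ (k - 1).fdiv 2 - 1 →
    iteratedDeriv (i + 1) U a = iteratedDeriv i (fun s => f s (U s)) a) ∧
  (∀ φ : ℝ → Vec d, IsPolyV (r - k) φ →
    locIs Ih a b (fun s => ⟪deriv U s, φ s⟫) +
        (if k = 0 then ⟪U a - Uprev, φ a⟫ else 0) =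
      locIs Ih a b (fun s => ⟪locOp Ic a b (fun x => f x (U x)) s, φ s⟫))

/-- The global discrete solution of the variational time discretization:
`P n` is the local polynomial on `I_n = (t_{n-1}, t_n]`. -/
def IsVTDSolution (d : ℕ) (Ih : (ℝ → ℝ) →ₗ[ℝ] ℝ) (Ic : (ℝ → ℝ) →ₗ[ℝ] (ℝ → ℝ))
    (r k : ℤ) (t : ℕ → ℝ) (N : ℕ) (f : ℝ → Vec d → Vec d) (u0 : Vec d)
    (P : ℕ → ℝ → Vec d) : Prop :=
  ∀ n : ℕ, 1 ≤ n → n ≤ N →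
    LocalVTD d Ih Ic r k (t (n - 1)) (t n) f
      (if n = 1 then u0 else P (n - 1) (t (n - 1))) (P n)

/-- Exactness of the local integrator on polynomials of degree at most `ρ`. -/
def QuadExact (Ih : (ℝ → ℝ) →ₗ[ℝ] ℝ) (a b : ℝ) (ρ : ℤ) : Prop :=
  ∀ φ : ℝ → ℝ, IsPolyR ρ φ → (∫ x in Ioc a b, φ x) = locIs Ih a b φ

/-- `I_n[φ ψ] = I_n[(ℐ_n φ) ψ]` for all `φ ∈ P_ρ` and `ψ ∈ P_i` (the property defining
`r^𝓘_{ℐ,i}`). -/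
def QuadInterpExact (Ih : (ℝ → ℝ) →ₗ[ℝ] ℝ) (Ic : (ℝ → ℝ) →ₗ[ℝ] (ℝ → ℝ))
    (a b : ℝ) (ρ : ℤ) (i : ℕ) : Prop :=
  ∀ φ : ℝ → ℝ, IsPolyR ρ φ → ∀ ψ : ℝ → ℝ, IsPolyR (i : ℤ) ψ →
    locIs Ih a b (fun x => φ x * ψ x) = locIs Ih a b (fun x => locOpR Ic a b φ x * ψ x)

/-- The defining interpolation conditions of the Hermite-type operator `𝓘ᵃᵖᵖ_n` on `(a,b]`. -/
def IsIapp (d : ℕ) (k : ℤ) (K : ℕ) (th : Fin (K + 1) → ℝ) (Kt : Fin (K + 1) → ℕ)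
    (a b : ℝ) (R : ℕ) (J : (ℝ → Vec d) → (ℝ → Vec d)) : Prop :=
  ∀ φ : ℝ → Vec d, ContDiff ℝ (⊤ : ℕ∞) φ →
    IsPolyV (R : ℤ) (J φ) ∧
    (∀ l : ℕ, (l : ℤ) ≤ k.fdiv 2 - 1 → iteratedDeriv l (J φ) b = iteratedDeriv l φ b) ∧
    (∀ l : ℕ, (l : ℤ) ≤ (k - 1).fdiv 2 - 1 →
      iteratedDeriv l (J φ) a = iteratedDeriv l φ a) ∧
    (∀ m : Fin (K + 1), ∀ l : ℕ, l ≤ Kt m →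
      iteratedDeriv l (J φ) (Tmap a b (th m)) = iteratedDeriv l φ (Tmap a b (th m)))

/-- Composition `ℐ¹ ∘ ⋯ ∘ ℐˡ` of a finite family of operators. -/
def compOps (l : ℕ) (Ops : Fin l → ((ℝ → ℝ) →ₗ[ℝ] (ℝ → ℝ))) : (ℝ → ℝ) → (ℝ → ℝ) :=
  (List.ofFn (fun j : Fin l => (Ops j : (ℝ → ℝ) → (ℝ → ℝ)))).foldr (· ∘ ·) id

/-!
Pull `φ` back to the reference interval: `ψ := (τ/2) φ' ∘ T` is a polynomial of degree `< r`, its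
derivatives of order `i - 1` at `∓1` are `(τ/2)^i φ^{(i)}` at the end points of `I_n`, and
`Î[(1 + t)^i ψ] = I_n[φ' (1 + T⁻¹)^i]`. So it suffices to bound `sup_{[-1,1]} ‖ψ‖` by these data,
uniformly in `ψ`. The data depend linearly on the coefficients of `ψ` and vanish only for `ψ = 0`:
vanishing at the end points makes each coordinate `(t + 1)^⌊(k-1)/2⌋ (t - 1)^⌊k/2⌋ ψ₀`, and the
moment conditions say exactly that `ψ₀` is annihilated by the weighted form of Assumption A1, so
`ψ₀ = 0`. In finite dimension this injectivity gives the bound. The other two inequalities are the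
trivial bound of an integral and the fundamental theorem of calculus.
-/

open Polynomial

theorem Polynomial.X_sub_C_pow_dvd_of_iterate_derivative_eval_eq_zero {R : Type*} [CommRing R]
    [IsDomain R] [CharZero R] {p : R[X]} {a : R} {n : ℕ}
    (h : ∀ j < n, (derivative^[j] p).eval a = 0) : (X - C a) ^ n ∣ p := by
  rcases eq_or_ne p 0 with rfl | hp
  · exact dvd_zero _
  rcases Nat.eq_zero_or_pos n with rfl | hn
  · simp
  rw [← le_rootMultiplicity_iff hp]
  have := lt_rootMultiplicity_of_isRoot_iterate_derivative (n := n - 1) hp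
    fun m hm => h m (by omega)
  omega

theorem LinearMap.map_mul_eval_eq_zero_of_one_add_pow (Ih : (ℝ → ℝ) →ₗ[ℝ] ℝ) (w : ℝ → ℝ)
    {s : ℕ} (h : ∀ j ≤ s, Ih (fun x => (1 + x) ^ j * w x) = 0) {p : ℝ[X]}
    (hp : p.natDegree ≤ s) : Ih (fun x => w x * p.eval x) = 0 := by
  have hexp : (fun x => w x * p.eval x) =
      ∑ j ∈ Finset.range (s + 1), (taylor (-1) p).coeff j • fun x => (1 + x) ^ j * w x := by
    funext x
    have htaylor : p.eval x = (taylor (-1) p).eval (x + 1) := by rw [taylor_eval]; ring_nf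
    rw [Finset.sum_apply, htaylor,
      eval_eq_sum_range' (n := s + 1) (by rw [natDegree_taylor]; omega), Finset.mul_sum]
    refine Finset.sum_congr rfl fun j _ => ?_
    simp only [Pi.smul_apply, smul_eq_mul]
    ring
  rw [hexp, map_sum]
  exact Finset.sum_eq_zero fun j hj => by
    rw [map_smul, h j (by simpa [Nat.lt_succ_iff] using hj), smul_zero]

theorem Polynomial.eq_zero_of_weighted_moments (Ih : (ℝ → ℝ) →ₗ[ℝ] ℝ) {A B δ s : ℕ}
    (hinj : ∀ ψ : ℝ[X], ψ.natDegree ≤ s →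
      (∀ j ≤ s, Ih (fun x => (1 + x) ^ j * ((1 - x) ^ B * (1 + x) ^ (A + δ) * ψ.eval x)) = 0) →
      ψ = 0)
    {q : ℝ[X]} (hdeg : q.natDegree ≤ A + B + s)
    (hA : ∀ j < A, (derivative^[j] q).eval (-1) = 0) (hB : ∀ j < B, (derivative^[j] q).eval 1 = 0)
    (hmom : ∀ j ≤ s, Ih (fun x => (1 + x) ^ (j + δ) * q.eval x) = 0) : q = 0 := by
  have hcop : IsCoprime ((X - C (-1 : ℝ)) ^ A) ((X - C 1) ^ B) :=
    (isCoprime_X_sub_C_of_isUnit_sub (by norm_num)).pow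
  obtain ⟨ψ, rfl⟩ := hcop.mul_dvd (X_sub_C_pow_dvd_of_iterate_derivative_eval_eq_zero hA)
    (X_sub_C_pow_dvd_of_iterate_derivative_eval_eq_zero hB)
  suffices ψ = 0 by rw [this, mul_zero]
  rcases eq_or_ne ψ 0 with hψ | hψ
  · exact hψ
  refine hinj ψ ?_ fun j hj => ?_
  · have hpow : ∀ (a : ℝ) (n : ℕ), (X - C a) ^ n ≠ 0 := fun a n => pow_ne_zero n (X_sub_C_ne_zero a)
    rw [natDegree_mul (mul_ne_zero (hpow _ _) (hpow _ _)) hψ, natDegree_mul (hpow _ _) (hpow _ _)]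
      at hdeg
    simp only [natDegree_pow, natDegree_X_sub_C, mul_one] at hdeg
    omega
  · have hsign : (fun x => (1 + x) ^ j * ((1 - x) ^ B * (1 + x) ^ (A + δ) * ψ.eval x)) =
        (-1 : ℝ) ^ B • fun x =>
          (1 + x) ^ (j + δ) * ((X - C (-1)) ^ A * (X - C 1) ^ B * ψ).eval x := by
      funext x
      simp only [eval_mul, eval_pow, eval_sub, eval_X, eval_C, Pi.smul_apply, smul_eq_mul]
      rw [show (1 - x) = -1 * (x - 1) by ring, mul_pow]
      ring
    rw [hsign, map_smul, hmom j hj, smul_zero]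

theorem AssumptionA1.eq_zero_of_moments {Ih : (ℝ → ℝ) →ₗ[ℝ] ℝ} {r k : ℤ}
    (hA1 : AssumptionA1 Ih r k) {s : ℕ} (hs : (s : ℤ) = r - max 1 k) {ψ : ℝ[X]}
    (hψ : ψ.natDegree ≤ s)
    (h : ∀ j ≤ s, Ih (fun x => (1 + x) ^ j * ((1 - x) ^ (k.fdiv 2).toNat *
      (1 + x) ^ ((k - 1).fdiv 2).natAbs * ψ.eval x)) = 0) : ψ = 0 := by
  refine Polynomial.funext fun x => (hA1 (fun x => ψ.eval x)
    ⟨ψ, fun n hn => coeff_eq_zero_of_natDegree_lt (by omega), fun _ => rfl⟩ ?_ x).trans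
    (eval_zero (x := x)).symm
  rintro φ ⟨p, hpc, hpφ⟩
  obtain rfl : φ = fun x => p.eval x := funext hpφ
  have hp : p.natDegree ≤ s := natDegree_le_iff_coeff_eq_zero.mpr fun n hn => hpc n (by omega)
  simpa only [mul_assoc] using Ih.map_mul_eval_eq_zero_of_one_add_pow _ h hp

theorem Polynomial.eq_zero_of_assumptionA1 {Ih : (ℝ → ℝ) →ₗ[ℝ] ℝ} {r k : ℤ} (h0k : 0 ≤ k)
    (hkr : k ≤ r) (hA1 : AssumptionA1 Ih r k) {q : ℝ[X]} (hq : q.degree < r.toNat)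
    (hA : ∀ i ∈ Finset.Icc 1 ((k - 1).fdiv 2).toNat, (derivative^[i - 1] q).eval (-1) = 0)
    (hB : ∀ i ∈ Finset.Icc 1 (k.fdiv 2).toNat, (derivative^[i - 1] q).eval 1 = 0)
    (hmom : ∀ i ∈ Finset.Icc (if k = 0 then 1 else 0) (r - k).toNat,
      Ih (fun x => (1 + x) ^ i * q.eval x) = 0) : q = 0 := by
  rcases eq_or_ne q 0 with hq0 | hq0
  · exact hq0
  have hqr : q.natDegree < r.toNat := (natDegree_lt_iff_degree_lt hq0).mpr hq
  have h1 : (k - 1).fdiv 2 = (k - 1) / 2 := Int.fdiv_eq_ediv_of_nonneg _ (by norm_num)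
  have h2 : k.fdiv 2 = k / 2 := Int.fdiv_eq_ediv_of_nonneg _ (by norm_num)
  set δ : ℕ := if k = 0 then 1 else 0 with hδ_def
  have hδ : (δ : ℤ) = max 1 k - k := by rw [hδ_def]; split_ifs <;> omega
  have hexp : ((k - 1).fdiv 2).natAbs = ((k - 1).fdiv 2).toNat + δ := by omega
  refine eq_zero_of_weighted_moments Ih (s := (r - max 1 k).toNat) (δ := δ)
    (fun ψ hψ h => hA1.eq_zero_of_moments (by omega) hψ (by rwa [hexp])) (by omega)
    (fun j hj => by simpa using hA (j + 1) (Finset.mem_Icc.mpr ⟨by omega, by omega⟩))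
    (fun j hj => by simpa using hB (j + 1) (Finset.mem_Icc.mpr ⟨by omega, by omega⟩))
    (fun j hj => hmom (j + δ) (Finset.mem_Icc.mpr ⟨by omega, by omega⟩))

theorem exists_norm_le_mul_sum_norm {ι E F : Type*} [NormedAddCommGroup E] [NormedSpace ℝ E]
    [FiniteDimensional ℝ E] [NormedAddCommGroup F] [NormedSpace ℝ F] (L : E →ₗ[ℝ] ι → F)
    (s : Finset ι) (hL : ∀ v, (∀ i ∈ s, L v i = 0) → v = 0) :
    ∃ K, 0 < K ∧ ∀ v, ‖v‖ ≤ K * ∑ i ∈ s, ‖L v i‖ := by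
  let Ls : E →ₗ[ℝ] s → F := LinearMap.pi fun i => (LinearMap.proj (i : ι)).comp L
  have hker : LinearMap.ker Ls = ⊥ :=
    LinearMap.ker_eq_bot'.2 fun v hv => hL v fun i hi => congrFun hv ⟨i, hi⟩
  obtain ⟨K, hK, hanti⟩ := Ls.exists_antilipschitzWith hker
  refine ⟨K, hK, fun v => (hanti.le_mul_norm (map_zero Ls) v).trans ?_⟩
  gcongr
  refine (pi_norm_le_iff_of_nonneg (by positivity)).2 fun i => ?_
  rw [← Finset.sum_coe_sort s]
  exact Finset.single_le_sum (f := fun i : s => ‖L v i‖) (fun _ _ => norm_nonneg _)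
    (Finset.mem_univ i)

theorem Polynomial.iteratedDeriv_eval (p : ℝ[X]) (n : ℕ) :
    iteratedDeriv n (fun x => p.eval x) = fun x => (derivative^[n] p).eval x := by
  induction n with
  | zero => rfl
  | succ n ih =>
    rw [iteratedDeriv_succ, ih, Function.iterate_succ_apply']
    funext x
    exact Polynomial.deriv _

theorem EuclideanSpace.iteratedDeriv_apply {ι : Type*} [Fintype ι]
    {f : ℝ → EuclideanSpace ℝ ι} {n : ℕ} (hf : ContDiff ℝ n f) (x : ℝ) (i : ι) :
    iteratedDeriv n f x i = iteratedDeriv n (fun y => f y i) x := by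
  simp only [iteratedDeriv_eq_iteratedFDeriv]
  rw [show (fun y => f y i) = EuclideanSpace.proj i ∘ f from rfl,
    (EuclideanSpace.proj i).iteratedFDeriv_comp_left hf.contDiffAt le_rfl]
  rfl

def polyVec {d m : ℕ} (c : Fin m → Vec d) (t : ℝ) : Vec d := ∑ j : Fin m, t ^ (j : ℕ) • c j

def coordPoly {d m : ℕ} (c : Fin m → Vec d) (i : Fin d) : ℝ[X] :=
  ∑ j : Fin m, C (c j i) * X ^ (j : ℕ)

section polyVec

variable {d m : ℕ}

theorem contDiff_polyVec (c : Fin m → Vec d) {n : WithTop ℕ∞} : ContDiff ℝ n (polyVec c) := by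
  unfold polyVec; fun_prop

theorem polyVec_add (c c' : Fin m → Vec d) : polyVec (c + c') = polyVec c + polyVec c' := by
  funext t; simp [polyVec, smul_add, Finset.sum_add_distrib]

theorem polyVec_smul (s : ℝ) (c : Fin m → Vec d) : polyVec (s • c) = s • polyVec c := by
  funext t; simp [polyVec, Finset.smul_sum, smul_comm s]

theorem polyVec_apply (c : Fin m → Vec d) (t : ℝ) (i : Fin d) :
    polyVec c t i = (coordPoly c i).eval t := by
  simp only [polyVec, coordPoly, WithLp.ofLp_sum, WithLp.ofLp_smul, Finset.sum_apply,
    Pi.smul_apply, smul_eq_mul, eval_finsetSum, eval_mul, eval_C, eval_pow, eval_X]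
  exact Finset.sum_congr rfl fun _ _ => mul_comm _ _

theorem iteratedDeriv_polyVec_apply (c : Fin m → Vec d) (n : ℕ) (x : ℝ) (i : Fin d) :
    iteratedDeriv n (polyVec c) x i = (derivative^[n] (coordPoly c i)).eval x := by
  rw [EuclideanSpace.iteratedDeriv_apply (contDiff_polyVec c) x i]
  simp only [polyVec_apply, Polynomial.iteratedDeriv_eval]

theorem coordPoly_coeff (c : Fin m → Vec d) (i : Fin d) (j : Fin m) :
    (coordPoly c i).coeff j = c j i := by
  simp [coordPoly, coeff_C_mul, coeff_X_pow, Fin.val_eq_val]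

theorem degree_coordPoly_lt (c : Fin m → Vec d) (i : Fin d) : (coordPoly c i).degree < m :=
  (degree_sum_fin_lt fun j => c j i).trans_eq' (by simp [coordPoly])

theorem norm_polyVec_le (c : Fin m → Vec d) {t : ℝ} (ht : |t| ≤ 1) :
    ‖polyVec c t‖ ≤ m * ‖c‖ :=
  calc ‖polyVec c t‖ ≤ ∑ j : Fin m, ‖t ^ (j : ℕ) • c j‖ := norm_sum_le _ _
    _ ≤ ∑ _j : Fin m, ‖c‖ := Finset.sum_le_sum fun j _ => by
        rw [norm_smul, norm_pow, Real.norm_eq_abs]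
        exact (mul_le_of_le_one_left (norm_nonneg _) (pow_le_one₀ (abs_nonneg t) ht)).trans
          (norm_le_pi_norm c j)
    _ = m * ‖c‖ := by simp

end polyVec

theorem IsPolyV.contDiff {d : ℕ} {s : ℤ} {f : ℝ → Vec d} (hf : IsPolyV s f) {n : WithTop ℕ∞} :
    ContDiff ℝ n f := by
  refine (contDiff_piLp 2).2 fun i => ?_
  obtain ⟨p, -, hp⟩ := hf i
  rw [funext hp]
  simp_rw [← coe_aeval_eq_eval]
  exact p.contDiff_aeval n

theorem IsPolyV.exists_deriv_eq_polyVec {d : ℕ} {r : ℤ} {f : ℝ → Vec d} (hf : IsPolyV r f) :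
    ∃ c : Fin r.toNat → Vec d, deriv f = polyVec c := by
  have hfC : ContDiff ℝ 1 f := hf.contDiff
  choose p hpc hpe using hf
  set c : Fin r.toNat → Vec d := fun j => WithLp.toLp 2 fun i => (derivative (p i)).coeff j
  have hcoord : ∀ i, coordPoly c i = derivative (p i) := fun i => by
    ext n
    by_cases hn : n < r.toNat
    · exact coordPoly_coeff c i ⟨n, hn⟩
    · have hmn : (r.toNat : WithBot ℕ) ≤ n := by exact_mod_cast not_lt.mp hn
      rw [coeff_eq_zero_of_degree_lt ((degree_coordPoly_lt c i).trans_le hmn), coeff_derivative,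
        hpc i (n + 1) (by omega), zero_mul]
  refine ⟨c, funext fun x => ?_⟩
  ext i
  rw [polyVec_apply, hcoord, ← iteratedDeriv_one, EuclideanSpace.iteratedDeriv_apply hfC,
    iteratedDeriv_one, funext (hpe i), Polynomial.deriv]

theorem vecI_add {d : ℕ} (Ih : (ℝ → ℝ) →ₗ[ℝ] ℝ) (f g : ℝ → Vec d) :
    vecI Ih (f + g) = vecI Ih f + vecI Ih g := by
  ext i
  simp only [vecI, Pi.add_apply, PiLp.add_apply, ← map_add]
  rfl

theorem vecI_smul {d : ℕ} (Ih : (ℝ → ℝ) →ₗ[ℝ] ℝ) (s : ℝ) (f : ℝ → Vec d) :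
    vecI Ih (s • f) = s • vecI Ih f := by
  ext i
  simp only [vecI, Pi.smul_apply, PiLp.smul_apply, ← map_smul]
  rfl

/-- One summand of `ℕ ⊕ ℕ ⊕ ℕ` per sum of the estimate; `ψ` plays the role of `(τ/2) φ' ∘ T`. -/
def refData {d : ℕ} (Ih : (ℝ → ℝ) →ₗ[ℝ] ℝ) (ψ : ℝ → Vec d) : ℕ ⊕ ℕ ⊕ ℕ → Vec d :=
  Sum.elim (fun i => iteratedDeriv (i - 1) ψ (-1)) <|
    Sum.elim (fun i => iteratedDeriv (i - 1) ψ 1) fun i => vecI Ih fun t => (1 + t) ^ i • ψ t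

def refIndex (r k : ℤ) : Finset (ℕ ⊕ ℕ ⊕ ℕ) :=
  (Finset.Icc 1 ((k - 1).fdiv 2).toNat).disjSum
    ((Finset.Icc 1 (k.fdiv 2).toNat).disjSum (Finset.Icc (if k = 0 then 1 else 0) (r - k).toNat))

def refDataPolyVec {d m : ℕ} (Ih : (ℝ → ℝ) →ₗ[ℝ] ℝ) :
    (Fin m → Vec d) →ₗ[ℝ] ℕ ⊕ ℕ ⊕ ℕ → Vec d where
  toFun c := refData Ih (polyVec c)
  map_add' c c' := by
    have hadd := fun n x => iteratedDeriv_add (n := n) (x := x)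
      (contDiff_polyVec c).contDiffAt (contDiff_polyVec c').contDiffAt
    funext idx
    rcases idx with i | i | i
    · simp [refData, polyVec_add, hadd]
    · simp [refData, polyVec_add, hadd]
    · simp only [refData, polyVec_add, Pi.add_apply, smul_add, Sum.elim_inr]
      exact vecI_add Ih _ _
  map_smul' s c := by
    funext idx
    rcases idx with i | i | i
    · simp [refData, polyVec_smul]
    · simp [refData, polyVec_smul]
    · simp only [refData, polyVec_smul, Pi.smul_apply, smul_comm _ s, Sum.elim_inr,
        RingHom.id_apply]
      exact vecI_smul Ih s _

section reference

variable {d : ℕ} {r k : ℤ} {Ih : (ℝ → ℝ) →ₗ[ℝ] ℝ}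

theorem eq_zero_of_refData_polyVec (h0k : 0 ≤ k) (hkr : k ≤ r) (hA1 : AssumptionA1 Ih r k)
    {c : Fin r.toNat → Vec d} (hc : ∀ idx ∈ refIndex r k, refData Ih (polyVec c) idx = 0) :
    c = 0 := by
  funext j
  ext i
  have hq : coordPoly c i = 0 := by
    refine eq_zero_of_assumptionA1 h0k hkr hA1 (degree_coordPoly_lt c i) (fun n hn => ?_)
      (fun n hn => ?_) (fun n hn => ?_)
    · simpa [refData, iteratedDeriv_polyVec_apply] using
        congrArg (· i) (hc (.inl n) (by simp [refIndex, hn]))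
    · simpa [refData, iteratedDeriv_polyVec_apply] using
        congrArg (· i) (hc (.inr (.inl n)) (by simp [refIndex, hn]))
    · simpa [refData, vecI, polyVec_apply] using
        congrArg (· i) (hc (.inr (.inr n)) (by simp [refIndex, hn]))
  simpa [hq] using (coordPoly_coeff c i j).symm

theorem exists_norm_deriv_le_refData (h0k : 0 ≤ k) (hkr : k ≤ r) (hA1 : AssumptionA1 Ih r k) :
    ∃ κ, 0 < κ ∧ ∀ f : ℝ → Vec d, IsPolyV r f → ∀ t ∈ Icc (-1 : ℝ) 1,
      ‖deriv f t‖ ≤ κ * ∑ idx ∈ refIndex r k, ‖refData Ih (deriv f) idx‖ := by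
  obtain ⟨K, hK, hKc⟩ := exists_norm_le_mul_sum_norm (refDataPolyVec (d := d) Ih) (refIndex r k)
    fun c hc => eq_zero_of_refData_polyVec h0k hkr hA1 hc
  refine ⟨(r.toNat + 1) * K, by positivity, fun f hf t ht => ?_⟩
  obtain ⟨c, hc⟩ := hf.exists_deriv_eq_polyVec
  rw [hc, mul_assoc]
  calc ‖polyVec c t‖ ≤ r.toNat * ‖c‖ := norm_polyVec_le c (abs_le.2 ht)
    _ ≤ (r.toNat + 1) * ‖c‖ := by gcongr; linarith
    _ ≤ (r.toNat + 1) * (K * ∑ idx ∈ refIndex r k, ‖refData Ih (polyVec c) idx‖) := by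
      gcongr; exact hKc c

end reference

section interval

variable {d : ℕ} {a b : ℝ}

theorem supNorm_le {s : Set ℝ} {f : ℝ → Vec d} {C : ℝ} (hC : 0 ≤ C)
    (h : ∀ x ∈ s, ‖f x‖ ≤ C) : supNorm s f ≤ C :=
  Real.iSup_le (fun x => h x x.2) hC

theorem norm_le_supNorm_Ioc {f : ℝ → Vec d} (hf : Continuous f) {x : ℝ} (hx : x ∈ Ioc a b) :
    ‖f x‖ ≤ supNorm (Ioc a b) f := by
  obtain ⟨C, hC⟩ := (isCompact_Icc (a := a) (b := b)).exists_bound_of_continuousOn hf.continuousOn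
  exact le_ciSup (f := fun y : Ioc a b => ‖f y‖)
    ⟨C, by rintro _ ⟨y, rfl⟩; exact hC y (Ioc_subset_Icc_self y.2)⟩ ⟨x, hx⟩

theorem integral_norm_le_mul_supNorm {f : ℝ → Vec d} (hf : Continuous f) (hab : a ≤ b) :
    ∫ x in Ioc a b, ‖f x‖ ≤ (b - a) * supNorm (Ioc a b) f := by
  have h := norm_setIntegral_le_of_norm_le_const (f := fun x => ‖f x‖) (C := supNorm (Ioc a b) f)
    (measure_Ioc_lt_top (μ := volume)) fun x hx => by simpa using norm_le_supNorm_Ioc hf hx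
  rw [Real.volume_real_Ioc_of_le hab, mul_comm] at h
  exact (le_abs_self _).trans h

theorem norm_sub_le_integral_norm_deriv {E : Type*} [NormedAddCommGroup E] [NormedSpace ℝ E]
    [CompleteSpace E] {f : ℝ → E} (hf : ContDiff ℝ 1 f) {u v : ℝ} (hau : a ≤ u) (huv : u ≤ v)
    (hvb : v ≤ b) : ‖f v - f u‖ ≤ ∫ x in Ioc a b, ‖deriv f x‖ := by
  have hcont : Continuous (deriv f) := hf.continuous_deriv le_rfl
  rw [← intervalIntegral.integral_deriv_eq_sub (fun x _ => hf.differentiable one_ne_zero x)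
    (hcont.intervalIntegrable u v)]
  calc ‖∫ x in u..v, deriv f x‖ ≤ ∫ x in u..v, ‖deriv f x‖ :=
        intervalIntegral.norm_integral_le_integral_norm huv
    _ = ∫ x in Ioc u v, ‖deriv f x‖ := intervalIntegral.integral_of_le huv
    _ ≤ ∫ x in Ioc a b, ‖deriv f x‖ :=
        setIntegral_mono_set hcont.norm.integrableOn_Ioc
          (Filter.Eventually.of_forall fun x => norm_nonneg _)
          (Ioc_subset_Ioc hau hvb).eventuallyLE

theorem supNorm_le_min_add_integral_norm_deriv {f : ℝ → Vec d} (hf : ContDiff ℝ 1 f) :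
    supNorm (Ioc a b) f ≤ min ‖f a‖ ‖f b‖ + ∫ x in Ioc a b, ‖deriv f x‖ := by
  have hI : 0 ≤ ∫ x in Ioc a b, ‖deriv f x‖ := setIntegral_nonneg measurableSet_Ioc
    fun x _ => norm_nonneg _
  refine supNorm_le (by positivity) fun x hx => ?_
  rw [← min_add_add_right]
  refine le_min ?_ ?_
  · calc ‖f x‖ ≤ ‖f a‖ + ‖f x - f a‖ := norm_le_insert' _ _
      _ ≤ _ := by gcongr; exact norm_sub_le_integral_norm_deriv hf le_rfl hx.1.le hx.2
  · calc ‖f x‖ ≤ ‖f b‖ + ‖f b - f x‖ := norm_le_norm_add_norm_sub _ _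
      _ ≤ _ := by gcongr; exact norm_sub_le_integral_norm_deriv hf hx.1.le hx.2 le_rfl

end interval

theorem iteratedDeriv_comp_affine {E : Type*} [NormedAddCommGroup E] [NormedSpace ℝ E]
    {f : ℝ → E} {n : ℕ} (hf : ContDiff ℝ n f) (α β : ℝ) :
    iteratedDeriv n (fun t => f (α + β * t)) = fun t => β ^ n • iteratedDeriv n f (α + β * t) := by
  have h := iteratedDeriv_comp_const_smul (f := fun y => f (α + y))
    (hf.comp (contDiff_const.add contDiff_id)) β
  rwa [iteratedDeriv_comp_const_add] at h

theorem IsPolyR.comp_affine {s : ℤ} {φ : ℝ → ℝ} (hφ : IsPolyR s φ) (α β : ℝ) :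
    IsPolyR s fun t => φ (α + β * t) := by
  obtain ⟨p, hpc, hpe⟩ := hφ
  refine ⟨p.comp (C α + C β * X), fun n hn => ?_, fun t => by simp [hpe]⟩
  have hp : p.natDegree ≤ s.toNat := natDegree_le_iff_coeff_eq_zero.2 fun m hm => hpc m (by omega)
  rcases lt_or_ge s 0 with hs | hs
  · rw [show p = 0 from Polynomial.ext fun m => hpc m (by omega), zero_comp, coeff_zero]
  · refine coeff_eq_zero_of_natDegree_lt (natDegree_comp_le.trans_lt ?_)
    have hlin : (C α + C β * X).natDegree ≤ 1 := by compute_degree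
    have := Nat.mul_le_mul hp hlin
    omega

theorem IsPolyV.comp_affine {d : ℕ} {s : ℤ} {φ : ℝ → Vec d} (hφ : IsPolyV s φ) (α β : ℝ) :
    IsPolyV s fun t => φ (α + β * t) :=
  fun i => (hφ i).comp_affine α β

theorem Tinv_Tmap {a b : ℝ} (hab : a ≠ b) (t : ℝ) : Tinv a b (Tmap a b t) = t := by
  rw [Tinv, Tmap, div_eq_iff (sub_ne_zero.2 hab.symm)]
  ring

theorem Tmap_Tinv {a b : ℝ} (hab : a ≠ b) (x : ℝ) : Tmap a b (Tinv a b x) = x := by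
  rw [Tinv, Tmap]
  field_simp [sub_ne_zero.2 hab.symm]
  ring

theorem Tinv_mem_Icc {a b x : ℝ} (hab : a < b) (hx : x ∈ Ioc a b) :
    Tinv a b x ∈ Icc (-1 : ℝ) 1 := by
  rw [Tinv, mem_Icc, le_div_iff₀ (by linarith), div_le_one (by linarith)]
  constructor <;> linarith [hx.1, hx.2]

section scaling

variable {d : ℕ} {r k : ℤ} {Ih : (ℝ → ℝ) →ₗ[ℝ] ℝ} {a b : ℝ} {φ : ℝ → Vec d}

theorem iteratedDeriv_comp_Tmap (hφ : ContDiff ℝ ⊤ φ) (n : ℕ) (t : ℝ) :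
    iteratedDeriv n (fun t => φ (Tmap a b t)) t =
      ((b - a) / 2) ^ n • iteratedDeriv n φ (Tmap a b t) :=
  congrFun (iteratedDeriv_comp_affine (hφ.of_le le_top) _ _) t

theorem deriv_comp_Tmap (hφ : ContDiff ℝ ⊤ φ) (t : ℝ) :
    deriv (fun t => φ (Tmap a b t)) t = ((b - a) / 2) • deriv φ (Tmap a b t) := by
  simpa using iteratedDeriv_comp_Tmap hφ 1 t

theorem sum_norm_refData_comp_Tmap (hab : a < b) (hφ : ContDiff ℝ ⊤ φ) :
    ∑ idx ∈ refIndex r k, ‖refData Ih (deriv fun t => φ (Tmap a b t)) idx‖ =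
      ∑ i ∈ Finset.Icc 1 ((k - 1).fdiv 2).toNat, ((b - a) / 2) ^ i * ‖iteratedDeriv i φ a‖ +
        ∑ i ∈ Finset.Icc 1 (k.fdiv 2).toNat, ((b - a) / 2) ^ i * ‖iteratedDeriv i φ b‖ +
        ∑ i ∈ Finset.Icc (if k = 0 then 1 else 0) (r - k).toNat,
          ‖locI Ih a b (fun x => (1 + Tinv a b x) ^ i • deriv φ x)‖ := by
  have hτ : 0 ≤ (b - a) / 2 := by linarith
  have hpoint : ∀ i, 1 ≤ i → ∀ t, ‖iteratedDeriv (i - 1) (deriv fun t => φ (Tmap a b t)) t‖ =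
      ((b - a) / 2) ^ i * ‖iteratedDeriv i φ (Tmap a b t)‖ := fun i hi t => by
    rw [← iteratedDeriv_succ', Nat.sub_add_cancel hi, iteratedDeriv_comp_Tmap hφ, norm_smul,
      Real.norm_of_nonneg (by positivity)]
  rw [refIndex, Finset.sum_disjSum, Finset.sum_disjSum, add_assoc]
  congr 1
  · refine Finset.sum_congr rfl fun i hi => ?_
    rw [refData, Sum.elim_inl, hpoint i (Finset.mem_Icc.1 hi).1 (-1), show Tmap a b (-1) = a by
      rw [Tmap]; ring]
  congr 1
  · refine Finset.sum_congr rfl fun i hi => ?_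
    rw [refData, Sum.elim_inr, Sum.elim_inl, hpoint i (Finset.mem_Icc.1 hi).1 1, show Tmap a b 1 = b by
      rw [Tmap]; ring]
  · refine Finset.sum_congr rfl fun i _ => ?_
    have hcomp : (fun x => (1 + Tinv a b x) ^ i • deriv φ x) ∘ Tmap a b =
        fun t => (1 + t) ^ i • deriv φ (Tmap a b t) := by
      funext t
      simp [Tinv_Tmap hab.ne]
    rw [refData, Sum.elim_inr, Sum.elim_inr, locI, hcomp, funext (deriv_comp_Tmap hφ)]
    simp_rw [smul_comm _ ((b - a) / 2)]
    exact congrArg norm (vecI_smul Ih _ fun t => (1 + t) ^ i • deriv φ (Tmap a b t))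

theorem mul_supNorm_deriv_le {κ : ℝ} (hκ : 0 ≤ κ)
    (href : ∀ f : ℝ → Vec d, IsPolyV r f → ∀ t ∈ Icc (-1 : ℝ) 1,
      ‖deriv f t‖ ≤ κ * ∑ idx ∈ refIndex r k, ‖refData Ih (deriv f) idx‖)
    (hab : a < b) (hφ : IsPolyV r φ) :
    (b - a) * supNorm (Ioc a b) (deriv φ) ≤
      2 * κ * ∑ idx ∈ refIndex r k, ‖refData Ih (deriv fun t => φ (Tmap a b t)) idx‖ := by
  set S := ∑ idx ∈ refIndex r k, ‖refData Ih (deriv fun t => φ (Tmap a b t)) idx‖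
  have hba : 0 < b - a := by linarith
  rw [← le_div_iff₀' hba]
  refine supNorm_le (by positivity) fun x hx => ?_
  have hφ' : IsPolyV r fun t => φ (Tmap a b t) := hφ.comp_affine _ _
  have h := href _ hφ' _ (Tinv_mem_Icc hab hx)
  rw [deriv_comp_Tmap hφ.contDiff, Tmap_Tinv hab.ne, norm_smul,
    Real.norm_of_nonneg (by positivity)] at h
  rw [le_div_iff₀' hba]
  linarith

end scaling

/-- Lemma 3.4: scaled norm inequalities for polynomials on a mesh
interval `(a, b]`. -/
theorem stmt_3 (d : ℕ) (r k : ℤ) (h0k : 0 ≤ k) (hkr : k ≤ r)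
    (Ih : (ℝ → ℝ) →ₗ[ℝ] ℝ) (hA1 : AssumptionA1 Ih r k) :
    ∃ κ : ℝ, 0 < κ ∧ ∀ a b : ℝ, a < b → ∀ φ : ℝ → Vec d, IsPolyV r φ →
      ((∫ x in Ioc a b, ‖deriv φ x‖) ≤ (b - a) * supNorm (Ioc a b) (deriv φ) ∧
        (b - a) * supNorm (Ioc a b) (deriv φ) ≤
          κ * (∑ i ∈ Finset.Icc 1 ((k - 1).fdiv 2).toNat,
                ((b - a) / 2) ^ i * ‖iteratedDeriv i φ a‖ +
              ∑ i ∈ Finset.Icc 1 (k.fdiv 2).toNat,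
                ((b - a) / 2) ^ i * ‖iteratedDeriv i φ b‖ +
              ∑ i ∈ Finset.Icc (if k = 0 then 1 else 0) (r - k).toNat,
                ‖locI Ih a b (fun x => (1 + Tinv a b x) ^ i • deriv φ x)‖)) ∧
      supNorm (Ioc a b) φ ≤
        min ‖φ a‖ ‖φ b‖ + ∫ x in Ioc a b, ‖deriv φ x‖ := by
  obtain ⟨κ, hκ, href⟩ := exists_norm_deriv_le_refData (d := d) h0k hkr hA1
  refine ⟨2 * κ, by positivity, fun a b hab φ hφ => ⟨⟨?_, ?_⟩, ?_⟩⟩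
  · exact integral_norm_le_mul_supNorm (hφ.contDiff.continuous_deriv le_rfl) hab.le
  · rw [← sum_norm_refData_comp_Tmap hab hφ.contDiff]
    exact mul_supNorm_deriv_le hκ.le href hab hφ
  · exact supNorm_le_min_add_integral_norm_deriv hφ.contDiff

end
end

section
/- Let r, k ∈ ℤ with 0 ≤ k ≤ r and i ∈ ℕ₀. Suppose the local operator ℐ_n is a projection onto polynomials of maximal degree r_ℐ (Assumption A6), that the local integrator I_n integrates exactly all polynomials of degree at most ρ_ex, and that ∫_{I_n} (φ − ℐ_nφ)(t)·ψ(t) dt = 0 for all φ ∈ P_σ(I_n) and all ψ ∈ P_i(I_n). Then for every φ ∈ P_m(I_n) with m ≤ max{r_ℐ, min{ρ_ex − i, σ}} and every ψ ∈ P_i(I_n): I_n[φ·ψ] = I_n[(ℐ_nφ)·ψ]. In particular, r^𝓘_{ℐ,i} ≥ max{r_ℐ, min{r_ex^𝓘 − i, r^int_{ℐ,i}}}, and without Assumption A6 one still always has r^𝓘_{ℐ,i} ≥ r_ℐ. -/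
open Set MeasureTheory
open scoped BigOperators RealInnerProductSpace

noncomputable section

/-! Since `Op` reproduces `P_{rI}`, only `φ` of degree `m > rI` needs an argument. Then `Op φ`
has degree `≤ rI < m` and both products `φ ψ`, `(Op φ) ψ` have degree `≤ m + i ≤ ρex`, so `Q`
integrates them exactly, and their exact integrals agree by the orthogonality of `φ - Op φ`
to `P_i`. -/

namespace IsPolyR

lemma mono {s t : ℤ} {φ : ℝ → ℝ} (h : s ≤ t) (hφ : IsPolyR s φ) : IsPolyR t φ := by
  obtain ⟨p, hp, hφp⟩ := hφ
  exact ⟨p, fun n hn => hp n (by omega), hφp⟩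

lemma mul {s t : ℤ} {φ ψ : ℝ → ℝ} (hφ : IsPolyR s φ) (hψ : IsPolyR t ψ) :
    IsPolyR (s + t) (fun x => φ x * ψ x) := by
  obtain ⟨p, hp, hφp⟩ := hφ
  obtain ⟨q, hq, hψq⟩ := hψ
  refine ⟨p * q, fun n hn => ?_, fun x => by simp [hφp, hψq]⟩
  rw [Polynomial.coeff_mul]
  refine Finset.sum_eq_zero fun jk hjk => ?_
  rw [Finset.HasAntidiagonal.mem_antidiagonal] at hjk
  rcases lt_or_ge s jk.1 with hj | hj
  · rw [hp _ hj, zero_mul]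
  · rw [hq _ (by omega), mul_zero]

lemma continuous {s : ℤ} {φ : ℝ → ℝ} (hφ : IsPolyR s φ) : Continuous φ := by
  obtain ⟨p, -, hφp⟩ := hφ
  simpa only [← hφp] using p.continuous

end IsPolyR

lemma quad_mul_eq_of_integral_sub_mul_eq_zero {Q : (ℝ → ℝ) → ℝ} {a b : ℝ} {ρ s t : ℤ}
    (hQ : ∀ φ : ℝ → ℝ, IsPolyR ρ φ → ∫ x in Ioc a b, φ x = Q φ) (hst : s + t ≤ ρ)
    {φ φ' ψ : ℝ → ℝ} (hφ : IsPolyR s φ) (hφ' : IsPolyR s φ') (hψ : IsPolyR t ψ)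
    (horth : ∫ x in Ioc a b, (φ x - φ' x) * ψ x = 0) :
    Q (fun x => φ x * ψ x) = Q (fun x => φ' x * ψ x) := by
  have hφψ := (hφ.mul hψ).mono hst
  have hφ'ψ := (hφ'.mul hψ).mono hst
  rw [← hQ _ hφψ, ← hQ _ hφ'ψ, ← sub_eq_zero,
    ← integral_sub hφψ.continuous.integrableOn_Ioc hφ'ψ.continuous.integrableOn_Ioc]
  simpa only [sub_mul] using horth

/-- `Q` is the local integrator `I_n[·]` and `Op` the local approximation operator `ℐ_n`. -/
theorem stmt_14_general (i : ℕ) (a b : ℝ)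
    (Q : (ℝ → ℝ) →ₗ[ℝ] ℝ) (Op : (ℝ → ℝ) →ₗ[ℝ] (ℝ → ℝ))
    (rI ρex σ : ℤ)
    (hrep : ∀ φ : ℝ → ℝ, IsPolyR rI φ → Op φ = φ) :
    (∀ φ : ℝ → ℝ, IsPolyR rI φ → ∀ ψ : ℝ → ℝ, IsPolyR (i : ℤ) ψ →
      Q (fun x => φ x * ψ x) = Q (fun x => Op φ x * ψ x)) ∧
    ((∀ (s : ℤ) (φ : ℝ → ℝ), IsPolyR s φ → IsPolyR rI (Op φ)) →
     (∀ φ : ℝ → ℝ, IsPolyR ρex φ → (∫ x in Ioc a b, φ x) = Q φ) →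
     (∀ φ : ℝ → ℝ, IsPolyR σ φ → ∀ ψ : ℝ → ℝ, IsPolyR (i : ℤ) ψ →
        (∫ x in Ioc a b, (φ x - Op φ x) * ψ x) = 0) →
     ∀ m : ℤ, m ≤ max rI (min (ρex - (i : ℤ)) σ) →
     ∀ φ : ℝ → ℝ, IsPolyR m φ → ∀ ψ : ℝ → ℝ, IsPolyR (i : ℤ) ψ →
       Q (fun x => φ x * ψ x) = Q (fun x => Op φ x * ψ x)) := by
  refine ⟨fun φ hφ _ _ => by rw [hrep φ hφ], ?_⟩
  intro hrange hexact horth m hm φ hφ ψ hψ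
  rcases le_or_gt m rI with hmr | hmr
  · rw [hrep φ (hφ.mono hmr)]
  · have hOpφ : IsPolyR m (Op φ) := (hrange m φ hφ).mono hmr.le
    exact quad_mul_eq_of_integral_sub_mul_eq_zero hexact (by omega) hφ hOpφ hψ
      (horth φ (hφ.mono (by omega)) ψ hψ)

/-- Lemma 4.13, first part: lower bounds for `r^𝓘_{ℐ,i}`.
`Q` is the local integrator `I_n[·]` and `Op` the local approximation operator `ℐ_n`.
The first conjunct is the unconditional bound `r^𝓘_{ℐ,i} ≥ r_ℐ`; the second gives
`r^𝓘_{ℐ,i} ≥ max{r_ℐ, min{r_ex^𝓘 − i, r^int_{ℐ,i}}}` under Assumption A6. -/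
theorem stmt_14 (i : ℕ) (a b : ℝ) (hab : a < b)
    (Q : (ℝ → ℝ) →ₗ[ℝ] ℝ) (Op : (ℝ → ℝ) →ₗ[ℝ] (ℝ → ℝ))
    (rI ρex σ : ℤ)
    (hrep : ∀ φ : ℝ → ℝ, IsPolyR rI φ → Op φ = φ) :
    (∀ φ : ℝ → ℝ, IsPolyR rI φ → ∀ ψ : ℝ → ℝ, IsPolyR (i : ℤ) ψ →
      Q (fun x => φ x * ψ x) = Q (fun x => Op φ x * ψ x)) ∧
    ((∀ (s : ℤ) (φ : ℝ → ℝ), IsPolyR s φ → IsPolyR rI (Op φ)) →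
     (∀ φ : ℝ → ℝ, IsPolyR ρex φ → (∫ x in Ioc a b, φ x) = Q φ) →
     (∀ φ : ℝ → ℝ, IsPolyR σ φ → ∀ ψ : ℝ → ℝ, IsPolyR (i : ℤ) ψ →
        (∫ x in Ioc a b, (φ x - Op φ x) * ψ x) = 0) →
     ∀ m : ℤ, m ≤ max rI (min (ρex - (i : ℤ)) σ) →
     ∀ φ : ℝ → ℝ, IsPolyR m φ → ∀ ψ : ℝ → ℝ, IsPolyR (i : ℤ) ψ →
       Q (fun x => φ x * ψ x) = Q (fun x => Op φ x * ψ x)) :=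
  stmt_14_general i a b Q Op rI ρex σ hrep

end
end
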